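/- The R-matrix satisfies the decorated Yang–Baxter equation: R₁₂(λ₁+λ₂) C₁ R₁₃(λ₁-λ₃) R₂₃(λ₂+λ₃) = R₂₃(λ₂+λ₃) R₁₃(λ₁-λ₃) C₁ R₁₂(λ₁+λ₂), as operators on V ⊗ V ⊗ V. -/
import Mathlib

open TensorProduct

noncomputable def flipMap (V : Type*) [AddCommGroup V] [Module ℂ V] :
    Module.End ℂ (V ⊗[ℂ] V) := (TensorProduct.comm ℂ V V).toLinearMap

noncomputable def SigmaOp {V : Type*} [AddCommGroup V] [Module ℂ V]
    (π : Module.End ℂ V) : Module.End ℂ (V ⊗[ℂ] V) :=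
  TensorProduct.map π (1 - π) + TensorProduct.map (1 - π) π

noncomputable def Rmat {V : Type*} [AddCommGroup V] [Module ℂ V]
    (π : Module.End ℂ V) (lam : ℝ) : Module.End ℂ (V ⊗[ℂ] V) :=
  SigmaOp π * flipMap V + (Real.sin lam : ℂ) • SigmaOp π
    + (Real.cos lam : ℂ) • ((1 - SigmaOp π) * flipMap V)

noncomputable def op12 {V : Type*} [AddCommGroup V] [Module ℂ V]
    (A : Module.End ℂ (V ⊗[ℂ] V)) : Module.End ℂ (V ⊗[ℂ] (V ⊗[ℂ] V)) :=
  (TensorProduct.assoc ℂ V V V).toLinearMap ∘ₗ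
    TensorProduct.map A LinearMap.id ∘ₗ
      (TensorProduct.assoc ℂ V V V).symm.toLinearMap

noncomputable def op23 {V : Type*} [AddCommGroup V] [Module ℂ V]
    (A : Module.End ℂ (V ⊗[ℂ] V)) : Module.End ℂ (V ⊗[ℂ] (V ⊗[ℂ] V)) :=
  TensorProduct.map LinearMap.id A

noncomputable def op13 {V : Type*} [AddCommGroup V] [Module ℂ V]
    (A : Module.End ℂ (V ⊗[ℂ] V)) : Module.End ℂ (V ⊗[ℂ] (V ⊗[ℂ] V)) :=
  op23 (flipMap V) * op12 A * op23 (flipMap V)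

section Aux

variable {V : Type*} [AddCommGroup V] [Module ℂ V] (π : Module.End ℂ V)

lemma flip_tmul (a b : V) : flipMap V (a ⊗ₜ[ℂ] b) = b ⊗ₜ[ℂ] a := rfl

lemma sigma_tmul (a b : V) :
    SigmaOp π (a ⊗ₜ[ℂ] b) = π a ⊗ₜ[ℂ] (b - π b) + (a - π a) ⊗ₜ[ℂ] π b := by
  simp [SigmaOp, LinearMap.sub_apply]

lemma Rmat_pp (lam : ℝ) {a b : V} (ha : π a = a) (hb : π b = b) :
    Rmat π lam (a ⊗ₜ[ℂ] b) = (Real.cos lam : ℂ) • (b ⊗ₜ[ℂ] a) := by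
  simp [Rmat, Module.End.mul_apply, LinearMap.sub_apply, flip_tmul, sigma_tmul, ha, hb]

lemma Rmat_mm (lam : ℝ) {a b : V} (ha : π a = 0) (hb : π b = 0) :
    Rmat π lam (a ⊗ₜ[ℂ] b) = (Real.cos lam : ℂ) • (b ⊗ₜ[ℂ] a) := by
  simp [Rmat, Module.End.mul_apply, LinearMap.sub_apply, flip_tmul, sigma_tmul, ha, hb]

lemma Rmat_pm (lam : ℝ) {a b : V} (ha : π a = a) (hb : π b = 0) :
    Rmat π lam (a ⊗ₜ[ℂ] b) = b ⊗ₜ[ℂ] a + (Real.sin lam : ℂ) • (a ⊗ₜ[ℂ] b) := by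
  simp [Rmat, Module.End.mul_apply, LinearMap.sub_apply, flip_tmul, sigma_tmul, ha, hb]

lemma Rmat_mp (lam : ℝ) {a b : V} (ha : π a = 0) (hb : π b = b) :
    Rmat π lam (a ⊗ₜ[ℂ] b) = b ⊗ₜ[ℂ] a + (Real.sin lam : ℂ) • (a ⊗ₜ[ℂ] b) := by
  simp [Rmat, Module.End.mul_apply, LinearMap.sub_apply, flip_tmul, sigma_tmul, ha, hb]

lemma op23_apply (A : Module.End ℂ (V ⊗[ℂ] V)) (x : V) (z : V ⊗[ℂ] V) :
    op23 A (x ⊗ₜ[ℂ] z) = x ⊗ₜ[ℂ] (A z) := rfl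

lemma op12_apply (A : Module.End ℂ (V ⊗[ℂ] V)) (x y z : V) :
    op12 A (x ⊗ₜ[ℂ] (y ⊗ₜ[ℂ] z)) =
      (TensorProduct.assoc ℂ V V V) ((A (x ⊗ₜ[ℂ] y)) ⊗ₜ[ℂ] z) := by
  simp [op12]

end Aux

theorem R_decorated_yang_baxter (V : Type*) [AddCommGroup V] [Module ℂ V]
    [FiniteDimensional ℂ V] (π : Module.End ℂ V) (hπ : π * π = π)
    (l1 l2 l3 : ℝ) :
    op12 (Rmat π (l1 + l2)) *
      (TensorProduct.map (π - (1 - π)) LinearMap.id :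
        Module.End ℂ (V ⊗[ℂ] (V ⊗[ℂ] V))) *
      op13 (Rmat π (l1 - l3)) * op23 (Rmat π (l2 + l3))
    = op23 (Rmat π (l2 + l3)) * op13 (Rmat π (l1 - l3)) *
        (TensorProduct.map (π - (1 - π)) LinearMap.id :
          Module.End ℂ (V ⊗[ℂ] (V ⊗[ℂ] V))) *
        op12 (Rmat π (l1 + l2)) := by
  rw [show l1 - l3 = (l1 + l2) - (l2 + l3) by ring]
  have px : Complex.sin ((l1 : ℂ) + l2) ^ 2 + Complex.cos ((l1 : ℂ) + l2) ^ 2 = 1 :=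
    Complex.sin_sq_add_cos_sq _
  have py : Complex.sin ((l2 : ℂ) + l3) ^ 2 + Complex.cos ((l2 : ℂ) + l3) ^ 2 = 1 :=
    Complex.sin_sq_add_cos_sq _
  set L := op12 (Rmat π (l1 + l2)) *
      (TensorProduct.map (π - (1 - π)) LinearMap.id :
        Module.End ℂ (V ⊗[ℂ] (V ⊗[ℂ] V))) *
      op13 (Rmat π ((l1 + l2) - (l2 + l3))) * op23 (Rmat π (l2 + l3)) with hL
  set R := op23 (Rmat π (l2 + l3)) * op13 (Rmat π ((l1 + l2) - (l2 + l3))) *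
        (TensorProduct.map (π - (1 - π)) LinearMap.id :
          Module.End ℂ (V ⊗[ℂ] (V ⊗[ℂ] V))) *
        op12 (Rmat π (l1 + l2)) with hR
  have key : ∀ a b c : V, (π a = a ∨ π a = 0) → (π b = b ∨ π b = 0) →
      (π c = c ∨ π c = 0) → L (a ⊗ₜ[ℂ] (b ⊗ₜ[ℂ] c)) = R (a ⊗ₜ[ℂ] (b ⊗ₜ[ℂ] c)) := by
    intro a b c ha hb hc
    rcases ha with ha | ha <;> rcases hb with hb | hb <;> rcases hc with hc | hc <;>
    · simp only [hL, hR, Module.End.mul_apply, op13, op23_apply, op12_apply,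
        map_add, map_smul, LinearMap.map_smul, tmul_add, tmul_smul, add_tmul,
        ← TensorProduct.smul_tmul', TensorProduct.assoc_tmul, TensorProduct.map_tmul,
        LinearMap.sub_apply, Module.End.one_apply, LinearMap.id_coe, id_eq,
        flip_tmul, Rmat_pp π _ , Rmat_mm π _, Rmat_pm π _, Rmat_mp π _,
        ha, hb, hc, sub_self, sub_zero, zero_sub, neg_tmul, tmul_neg,
        Real.sin_sub, Real.cos_sub, Complex.ofReal_sub, Complex.ofReal_add,
        Complex.ofReal_mul, Complex.ofReal_sin, Complex.ofReal_cos,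
        smul_add, smul_neg, map_neg]
      match_scalars <;>
        first
          | ring1
          | linear_combination Complex.sin ((l2 : ℂ) + l3) * px
          | linear_combination (-Complex.sin ((l2 : ℂ) + l3)) * px
          | linear_combination Complex.sin ((l1 : ℂ) + l2) * py
          | linear_combination (-Complex.sin ((l1 : ℂ) + l2)) * py
  have hproj : ∀ v : V, π (π v) = π v := fun v => by
    have := DFunLike.congr_fun hπ v
    simpa [Module.End.mul_apply] using this
  apply TensorProduct.ext'
  intro a z
  induction z using TensorProduct.induction_on with
  | zero => simp
  | add u v hu hv => rw [tmul_add, map_add, map_add, hu, hv]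
  | tmul b c =>
    have ha1 : π (π a) = π a := hproj a
    have ha2 : π (a - π a) = 0 := by simp [map_sub, hproj a]
    have hb1 : π (π b) = π b := hproj b
    have hb2 : π (b - π b) = 0 := by simp [map_sub, hproj b]
    have hc1 : π (π c) = π c := hproj c
    have hc2 : π (c - π c) = 0 := by simp [map_sub, hproj c]
    have hA : a = π a + (a - π a) := by abel
    have hB : b = π b + (b - π b) := by abel
    have hC : c = π c + (c - π c) := by abel
    rw [hA, hB, hC]
    simp only [add_tmul, tmul_add, map_add]
    rw [key _ _ _ (Or.inl ha1) (Or.inl hb1) (Or.inl hc1),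
        key _ _ _ (Or.inl ha1) (Or.inl hb1) (Or.inr hc2),
        key _ _ _ (Or.inl ha1) (Or.inr hb2) (Or.inl hc1),
        key _ _ _ (Or.inl ha1) (Or.inr hb2) (Or.inr hc2),
        key _ _ _ (Or.inr ha2) (Or.inl hb1) (Or.inl hc1),
        key _ _ _ (Or.inr ha2) (Or.inl hb1) (Or.inr hc2),
        key _ _ _ (Or.inr ha2) (Or.inr hb2) (Or.inl hc1),
        key _ _ _ (Or.inr ha2) (Or.inr hb2) (Or.inr hc2)]
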